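/- arXiv:quant-ph/0205164 — 9 statements merged into one kernel-verified Lean document; each statement's English description precedes it below -/
import Mathlib

section
/- If a state context property system has property completeness and state completeness, then the pre-ordered set of properties (L, <) is a complete pre-ordered set: every subset of L has an infimum and a supremum with respect to the pre-order. -/
/-- If a state context property system has property completeness
and state completeness, then the pre-ordered set of properties `(L, <)` is a
complete pre-ordered set: every subset of `L` has an infimum and a supremum. -/
theorem property_poset_complete
    (S L : Type) (ξ : S → Set L)
    (κ : L → Set S) (hκ : ∀ a p, p ∈ κ a ↔ a ∈ ξ p)
    (ltL : L → L → Prop) (hltL : ∀ a b, ltL a b ↔ κ a ⊆ κ b)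
    (hpc : ∀ A : Set L, ∃ c : L, ∀ p : S, c ∈ ξ p ↔ ∀ a ∈ A, a ∈ ξ p)
    (hsc : ∀ P : Set S, ∃ s : S, ∀ a : L, s ∈ κ a ↔ ∀ p ∈ P, p ∈ κ a) :
    ∀ A : Set L,
      (∃ i : L, (∀ a ∈ A, ltL i a) ∧ ∀ b : L, (∀ a ∈ A, ltL b a) → ltL b i) ∧
      (∃ s : L, (∀ a ∈ A, ltL a s) ∧ ∀ b : L, (∀ a ∈ A, ltL a b) → ltL s b) := by
  -- general meet construction
  have meet : ∀ A : Set L, ∃ c : L, ∀ p : S, p ∈ κ c ↔ ∀ a ∈ A, p ∈ κ a := by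
    intro A
    obtain ⟨c, hc⟩ := hpc A
    exact ⟨c, fun p => by
      rw [hκ]
      constructor
      · intro h a ha; rw [hκ]; exact (hc p).1 h a ha
      · intro h; exact (hc p).2 fun a ha => (hκ a p).1 (h a ha)⟩
  intro A
  constructor
  · obtain ⟨c, hc⟩ := meet A
    refine ⟨c, fun a ha => (hltL c a).2 fun p hp => (hc p).1 hp a ha, ?_⟩
    intro b hb
    exact (hltL b c).2 fun p hp => (hc p).2 fun a ha => (hltL b a).1 (hb a ha) hp
  · obtain ⟨c, hc⟩ := meet {b | ∀ a ∈ A, ltL a b}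
    refine ⟨c, ?_, ?_⟩
    · intro a ha
      exact (hltL a c).2 fun p hp => (hc p).2 fun b hb => (hltL a b).1 (hb a ha) hp
    · intro b hb
      exact (hltL c b).2 fun p hp => (hc p).1 hp b hb
end

section
/- If a state context property system has property completeness and state completeness, then the pre-ordered set of states (Σ, <) is a complete pre-ordered set: every subset of Σ has a supremum and an infimum. -/
/-- If a state context property system has property completeness
and state completeness, then the pre-ordered set of states `(Σ, <)` is a
complete pre-ordered set: every subset of `Σ` has a supremum and an infimum. -/
theorem state_poset_complete
    (S L : Type) (ξ : S → Set L)
    (κ : L → Set S) (hκ : ∀ a p, p ∈ κ a ↔ a ∈ ξ p)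
    (ltS : S → S → Prop) (hltS : ∀ p q, ltS p q ↔ ξ q ⊆ ξ p)
    (hpc : ∀ A : Set L, ∃ c : L, ∀ p : S, c ∈ ξ p ↔ ∀ a ∈ A, a ∈ ξ p)
    (hsc : ∀ P : Set S, ∃ s : S, ∀ a : L, s ∈ κ a ↔ ∀ p ∈ P, p ∈ κ a) :
    ∀ P : Set S,
      (∃ s : S, (∀ p ∈ P, ltS p s) ∧ ∀ q : S, (∀ p ∈ P, ltS p q) → ltS s q) ∧
      (∃ i : S, (∀ p ∈ P, ltS i p) ∧ ∀ q : S, (∀ p ∈ P, ltS q p) → ltS q i) := by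
  intro P
  constructor
  · obtain ⟨s, hs⟩ := hsc P
    have hξs : ∀ a : L, a ∈ ξ s ↔ ∀ p ∈ P, a ∈ ξ p := by
      intro a
      rw [← hκ]
      constructor
      · intro h p hp; rw [← hκ]; exact (hs a).1 h p hp
      · intro h; exact (hs a).2 fun p hp => (hκ a p).2 (h p hp)
    refine ⟨s, fun p hp => (hltS p s).2 fun a ha => (hξs a).1 ha p hp,
      fun q hq => (hltS s q).2 fun a ha => (hξs a).2 fun p hp => (hltS p q).1 (hq p hp) ha⟩
  · obtain ⟨i, hi⟩ := hsc {q | ∀ p ∈ P, ltS q p}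
    have hξi : ∀ a : L, a ∈ ξ i ↔ ∀ q, (∀ p ∈ P, ltS q p) → a ∈ ξ q := by
      intro a
      rw [← hκ]
      constructor
      · intro h q hq; rw [← hκ]; exact (hi a).1 h q hq
      · intro h; exact (hi a).2 fun q hq => (hκ a q).2 (h q hq)
    refine ⟨i, fun p hp => (hltS i p).2 fun a ha => (hξi a).2
        fun q hq => (hltS q p).1 (hq p hp) ha,
      fun q hq => (hltS q i).2 fun a ha => (hξi a).1 ha q hq⟩
end

section
/- Under property and state completeness, the maps t : L → Σ, a ↦ ∨_{p ∈ κ(a)} p, and s : Σ → L, p ↦ ∧_{a ∈ ξ(p)} a, satisfy: a < b iff t(a) < t(b), and p < q iff s(p) < s(q). -/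
/-- Under property and state completeness, the maps
`t : L → Σ, a ↦ ∨_{p ∈ κ a} p` and `s : Σ → L, p ↦ ∧_{a ∈ ξ p} a` satisfy:
`a < b` iff `t a < t b`, and `p < q` iff `s p < s q`. -/
theorem t_and_s_preserve_order
    (S L : Type) (ξ : S → Set L)
    (κ : L → Set S) (hκ : ∀ a p, p ∈ κ a ↔ a ∈ ξ p)
    (ltL : L → L → Prop) (hltL : ∀ a b, ltL a b ↔ κ a ⊆ κ b)
    (ltS : S → S → Prop) (hltS : ∀ p q, ltS p q ↔ ξ q ⊆ ξ p)
    (t : L → S) (ht : ∀ (a : L) (b : L), t a ∈ κ b ↔ ∀ p ∈ κ a, p ∈ κ b)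
    (s : S → L) (hs : ∀ (p : S) (r : S), s p ∈ ξ r ↔ ∀ a ∈ ξ p, a ∈ ξ r) :
    (∀ a b : L, ltL a b ↔ ltS (t a) (t b)) ∧
    (∀ p q : S, ltS p q ↔ ltL (s p) (s q)) := by
  have hξt : ∀ a c : L, c ∈ ξ (t a) ↔ κ a ⊆ κ c := by
    intro a c
    rw [← hκ, ht]; rfl
  have hκs : ∀ p r : S, r ∈ κ (s p) ↔ ξ p ⊆ ξ r := by
    intro p r
    rw [hκ, hs]; rfl
  constructor
  · intro a b
    rw [hltL, hltS]
    constructor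
    · intro h c hc
      rw [hξt] at hc ⊢
      exact h.trans hc
    · intro h
      have := h ((hξt b b).mpr (fun x hx => hx))
      exact (hξt a b).mp this
  · intro p q
    rw [hltS, hltL]
    constructor
    · intro h r hr
      rw [hκs] at hr ⊢
      exact h.trans hr
    · intro h
      have := h ((hκs p p).mpr (fun x hx => hx))
      exact (hκs q p).mp this
end

section
/- Under property and state completeness, t(∧_i a_i) is equivalent to ∧_i t(a_i) in the pre-order on Σ, i.e. t(∧_i a_i) < ∧_i t(a_i) and ∧_i t(a_i) < t(∧_i a_i). -/
/-- Under property and state completeness, `t (∧ᵢ aᵢ)` is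
equivalent to `∧ᵢ t (aᵢ)` in the pre-order on `Σ`: `t (∧ᵢ aᵢ) < ∧ᵢ t (aᵢ)`
and `∧ᵢ t (aᵢ) < t (∧ᵢ aᵢ)`. -/
theorem t_meet_equivalent_meet_t
    (S L : Type) (ι : Type) (ξ : S → Set L)
    (κ : L → Set S) (hκ : ∀ a p, p ∈ κ a ↔ a ∈ ξ p)
    (ltS : S → S → Prop) (hltS : ∀ p q, ltS p q ↔ ξ q ⊆ ξ p)
    (t : L → S) (ht : ∀ (a : L) (b : L), t a ∈ κ b ↔ ∀ p ∈ κ a, p ∈ κ b)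
    (a : ι → L) (c : L)
    (hc : ∀ p : S, c ∈ ξ p ↔ ∀ i, a i ∈ ξ p)
    (d : S)
    (hd_lb : ∀ i, ltS d (t (a i)))
    (hd_glb : ∀ q : S, (∀ i, ltS q (t (a i))) → ltS q d) :
    ltS (t c) d ∧ ltS d (t c) := by
  constructor
  · apply hd_glb
    intro i
    rw [hltS]
    intro b hb
    rw [← hκ, ht] at hb ⊢
    intro p hp
    exact hb p ((hκ _ _).mpr ((hc p).mp ((hκ _ _).mp hp) i))
  · -- d ∈ κ c
    have hdc : d ∈ κ c := by
      rw [hκ, hc]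
      intro i
      have := (hltS d (t (a i))).mp (hd_lb i)
      exact this ((hκ _ _).mp ((ht (a i) (a i)).mpr (fun p hp => hp)))
    rw [hltS]
    intro b hb
    rw [← hκ, ht] at hb
    exact (hκ _ _).mp (hb d hdc)
end

section
/- Under property and state completeness, for every state p, ξ(p) equals the up-set [s(p), +∞) = {a ∈ L : s(p) < a}, and for every property a, κ(a) equals the down-set (-∞, t(a)] = {p ∈ Σ : p < t(a)}. -/
/-- Under property and state completeness, for every state `p`,
`ξ p` equals the up-set `{a : s p < a}`, and for every property `a`, `κ a`
equals the down-set `{p : p < t a}`. -/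
theorem xi_upset_kappa_downset
    (S L : Type) (ξ : S → Set L)
    (κ : L → Set S) (hκ : ∀ a p, p ∈ κ a ↔ a ∈ ξ p)
    (ltL : L → L → Prop) (hltL : ∀ a b, ltL a b ↔ κ a ⊆ κ b)
    (ltS : S → S → Prop) (hltS : ∀ p q, ltS p q ↔ ξ q ⊆ ξ p)
    (t : L → S) (ht : ∀ (a : L) (b : L), t a ∈ κ b ↔ ∀ p ∈ κ a, p ∈ κ b)
    (s : S → L) (hs : ∀ (p : S) (r : S), s p ∈ ξ r ↔ ∀ a ∈ ξ p, a ∈ ξ r) :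
    (∀ p : S, ξ p = {a : L | ltL (s p) a}) ∧
    (∀ a : L, κ a = {p : S | ltS p (t a)}) := by
  constructor
  · intro p
    ext a
    simp only [Set.mem_setOf_eq, hltL]
    constructor
    · intro ha r hr
      rw [hκ] at hr ⊢
      exact (hs p r).mp hr a ha
    · intro h
      have hp : p ∈ κ (s p) := (hκ _ _).mpr ((hs p p).mpr fun a ha => ha)
      exact (hκ _ _).mp (h hp)
  · intro a
    ext p
    simp only [Set.mem_setOf_eq, hltS]
    constructor
    · intro hp b hb
      rw [← hκ] at hb ⊢
      exact (ht a b).mp hb p hp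
    · intro h
      have hta : a ∈ ξ (t a) := (hκ _ _).mp ((ht a a).mpr fun p hp => hp)
      exact (hκ _ _).mpr (h hta)
end

section
/- A morphism (m, l, n) between property- and state-complete state context property systems satisfies n(∧_i a_i) ≈ ∧_i n(a_i): the image of a meet property is equivalent to a meet of the images. -/
/-- A morphism `(m, l, n)` between property- and state-complete
state context property systems satisfies `n (∧ᵢ aᵢ) ≈ ∧ᵢ n (aᵢ)`: the image of
a meet property is equivalent to a meet of the images, where equivalence is
mutual implication in the pre-order on `L'`. -/
theorem morphism_preserves_meet
    (S L S' L' : Type) (ι : Type)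
    (ξ : S → Set L) (ξ' : S' → Set L')
    (m : S' → S) (n : L → L')
    (hξ : ∀ (a : L) (p' : S'), a ∈ ξ (m p') ↔ n a ∈ ξ' p')
    (κ' : L' → Set S') (hκ' : ∀ a' p', p' ∈ κ' a' ↔ a' ∈ ξ' p')
    (ltL' : L' → L' → Prop) (hltL' : ∀ a' b', ltL' a' b' ↔ κ' a' ⊆ κ' b')
    (a : ι → L) (c : L)
    (hc : ∀ p : S, c ∈ ξ p ↔ ∀ i, a i ∈ ξ p)
    (c' : L')
    (hc' : ∀ p' : S', c' ∈ ξ' p' ↔ ∀ i, n (a i) ∈ ξ' p') :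
    ltL' (n c) c' ∧ ltL' c' (n c) := by
  have key : ∀ p', n c ∈ ξ' p' ↔ c' ∈ ξ' p' := by
    intro p'
    rw [← hξ, hc, hc']
    exact forall_congr' fun i => hξ (a i) p'
  constructor <;> rw [hltL'] <;> intro p' hp' <;>
    rw [hκ'] at hp' ⊢ <;> [exact (key p').mp hp'; exact (key p').mpr hp']
end

section
/- A morphism (m, l, n) between property- and state-complete state context property systems satisfies m(∨_j p'_j) ≈ ∨_j m(p'_j): the image of a join state is equivalent to a join of the images. -/
/-- A morphism `(m, l, n)` between property- and state-complete
state context property systems satisfies `m (∨ⱼ p'ⱼ) ≈ ∨ⱼ m (p'ⱼ)`: the image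
of a join state is equivalent to a join of the images, where equivalence is
mutual implication in the pre-order on `Σ`. -/
theorem morphism_preserves_join
    (S L S' L' : Type) (ι : Type)
    (ξ : S → Set L) (ξ' : S' → Set L')
    (m : S' → S) (n : L → L')
    (hξ : ∀ (a : L) (p' : S'), a ∈ ξ (m p') ↔ n a ∈ ξ' p')
    (κ : L → Set S) (hκ : ∀ a p, p ∈ κ a ↔ a ∈ ξ p)
    (κ' : L' → Set S') (hκ' : ∀ a' p', p' ∈ κ' a' ↔ a' ∈ ξ' p')
    (ltS : S → S → Prop) (hltS : ∀ p q, ltS p q ↔ ξ q ⊆ ξ p)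
    (p' : ι → S') (P' : S')
    (hP' : ∀ a' : L', P' ∈ κ' a' ↔ ∀ j, p' j ∈ κ' a')
    (Q : S)
    (hQ : ∀ a : L, Q ∈ κ a ↔ ∀ j, m (p' j) ∈ κ a) :
    ltS (m P') Q ∧ ltS Q (m P') := by
  have key : ∀ a : L, a ∈ ξ Q ↔ a ∈ ξ (m P') := by
    intro a
    rw [← hκ, hQ, hξ, ← hκ']
    rw [hP']
    constructor
    · intro h j
      rw [hκ', ← hξ, ← hκ]
      exact h j
    · intro h j
      rw [hκ, hξ, ← hκ']
      exact h j
  constructor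
  · rw [hltS]; intro a ha; exact (key a).mp ha
  · rw [hltS]; intro a ha; exact (key a).mpr ha
end

section
/- If each experiment eᵢ tests property aᵢ via subset Aᵢ ⊆ O(eᵢ), and the outcome sets O(eᵢ) are pairwise disjoint, then the product experiment Πᵢeᵢ, with outcome sets O(Πᵢeᵢ, p) = ⋃ᵢ O(eᵢ, p) and test set A = ⋃ᵢ Aᵢ, tests the meet property ∧ᵢaᵢ: O(Πᵢeᵢ, p) ⊆ A iff aᵢ ∈ ξ(p) for all i. -/
/-- If each experiment `eᵢ` tests property `aᵢ` via `Aᵢ ⊆ O (eᵢ)`,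
and the outcome sets `O (eᵢ)` are pairwise disjoint, then the product
experiment `Πᵢ eᵢ`, with outcome sets `O (Πᵢ eᵢ) p = ⋃ᵢ O (eᵢ) p` and test set
`A = ⋃ᵢ Aᵢ`, tests the meet property `∧ᵢ aᵢ`:
`O (Πᵢ eᵢ) p ⊆ A` iff `aᵢ ∈ ξ p` for all `i`. -/
theorem product_experiment_tests_meet
    (S M L X : Type) (ι : Type)
    (ξ : S → Set L)
    (O : M → S → Set X)
    (e : ι → M) (a : ι → L) (A : ι → Set X)
    (hA : ∀ i, A i ⊆ ⋃ p : S, O (e i) p)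
    (htest : ∀ i (p : S), a i ∈ ξ p ↔ O (e i) p ⊆ A i)
    (hdisj : ∀ i j, i ≠ j → (⋃ p : S, O (e i) p) ∩ (⋃ p : S, O (e j) p) = ∅)
    (hne : ∀ i (p : S), (O (e i) p).Nonempty)
    (E : M)
    (hE : ∀ p : S, O E p = ⋃ i, O (e i) p) :
    ∀ p : S, O E p ⊆ (⋃ i, A i) ↔ ∀ i, a i ∈ ξ p := by
  intro p
  constructor
  · intro h i
    rw [htest]
    intro x hx
    have hxE : x ∈ O E p := by rw [hE]; exact Set.mem_iUnion.2 ⟨i, hx⟩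
    obtain ⟨j, hxj⟩ := Set.mem_iUnion.1 (h hxE)
    rcases eq_or_ne i j with rfl | hij
    · exact hxj
    · exfalso
      have : x ∈ (⋃ p : S, O (e i) p) ∩ (⋃ p : S, O (e j) p) :=
        ⟨Set.mem_iUnion.2 ⟨p, hx⟩, hA j hxj⟩
      rw [hdisj i j hij] at this
      exact this
  · intro h x hx
    rw [hE] at hx
    obtain ⟨i, hxi⟩ := Set.mem_iUnion.1 hx
    exact Set.mem_iUnion.2 ⟨i, (htest i p).1 (h i) hxi⟩
end

section
/- For an operational entity (every property is tested by some experiment), the product state Πᵢpᵢ, whose outcome sets satisfy O(e, Πᵢpᵢ) = ⋃ᵢ O(e, pᵢ) for every experiment e, is a join state of the family (pᵢ): for every property a, Πᵢpᵢ ∈ κ(a) iff pᵢ ∈ κ(a) for all i. -/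
/-- For an operational entity (every property is tested by some
experiment), the product state `Πᵢ pᵢ`, whose outcome sets satisfy
`O e (Πᵢ pᵢ) = ⋃ᵢ O e pᵢ` for every experiment `e`, is a join state of the
family `(pᵢ)`: for every property `a`, `Πᵢ pᵢ ∈ κ a` iff `pᵢ ∈ κ a` for all `i`. -/
theorem product_state_is_join_state
    (S M L X : Type) (ι : Type)
    (ξ : S → Set L)
    (κ : L → Set S) (hκ : ∀ a p, p ∈ κ a ↔ a ∈ ξ p)
    (O : M → S → Set X)
    (hop : ∀ a : L, ∃ (e : M) (A : Set X),
      A ⊆ (⋃ p : S, O e p) ∧ ∀ p : S, a ∈ ξ p ↔ O e p ⊆ A)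
    (p : ι → S) (P : S)
    (hP : ∀ e : M, O e P = ⋃ i, O e (p i)) :
    ∀ a : L, P ∈ κ a ↔ ∀ i, p i ∈ κ a := by
  intro a
  obtain ⟨e, A, -, hA⟩ := hop a
  simp only [hκ, hA, hP e, Set.iUnion_subset_iff]
end
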